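/- arXiv:nlin/0202023 — 5 statements merged into one kernel-verified Lean document; each statement's English description precedes it below -/
import Mathlib

section
/- Let a1 < a2 < a3 be real and X, Y real with X > 0, Y > 0, X + Y < 1. The matrix L with entries A = (a3-a1)X + a1, B = (a3-a2)X, C = (a3-a1)Y, D = (a3-a2)Y + a2 has two distinct real eigenvalues λ1, λ2 with a1 < λ1 < a2 < λ2 < a3. -/
open Matrix

lemma eig_of_det_eq_zero (M : Matrix (Fin 2) (Fin 2) ℝ) (lam : ℝ)
    (h : (M - lam • 1).det = 0) :
    Module.End.HasEigenvalue (Matrix.toLin' M) lam := by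
  obtain ⟨v, hv, hMv⟩ := (Matrix.exists_mulVec_eq_zero_iff).2 h
  apply Module.End.hasEigenvalue_of_hasEigenvector (x := v)
  refine ⟨?_, hv⟩
  rw [Module.End.mem_eigenspace_iff, Matrix.toLin'_apply]
  have hexp : (M - lam • 1) *ᵥ v = M *ᵥ v - lam • v := by
    rw [Matrix.sub_mulVec, Matrix.smul_mulVec, Matrix.one_mulVec]
  rw [hexp] at hMv
  exact sub_eq_zero.mp hMv

/-- The conformal Killing tensor of the Neumann system, in the coordinates
`X = x², Y = y²` on an octant of the sphere, has two distinct real eigenvalues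
interlacing `a₁ < a₂ < a₃`. -/
theorem neumann_killing_tensor_eigenvalues
    (a1 a2 a3 X Y : ℝ) (h12 : a1 < a2) (h23 : a2 < a3)
    (hX : 0 < X) (hY : 0 < Y) (hXY : X + Y < 1)
    (L : Matrix (Fin 2) (Fin 2) ℝ)
    (hL : L = !![(a3 - a1) * X + a1, (a3 - a2) * X;
                 (a3 - a1) * Y, (a3 - a2) * Y + a2]) :
    ∃ lam1 lam2 : ℝ,
      a1 < lam1 ∧ lam1 < a2 ∧ a2 < lam2 ∧ lam2 < a3 ∧ lam1 ≠ lam2 ∧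
      Module.End.HasEigenvalue (Matrix.toLin' L) lam1 ∧
      Module.End.HasEigenvalue (Matrix.toLin' L) lam2 := by
  set f : ℝ → ℝ := fun t =>
    ((a3 - a1) * X + a1 - t) * ((a3 - a2) * Y + a2 - t) -
      ((a3 - a2) * X) * ((a3 - a1) * Y) with hf
  have hdet : ∀ t : ℝ, (L - t • (1 : Matrix (Fin 2) (Fin 2) ℝ)).det = f t := by
    intro t
    subst hL
    simp only [Matrix.det_fin_two, Matrix.sub_apply, Matrix.smul_apply,
      Matrix.one_apply, Matrix.cons_val', Matrix.cons_val_zero, Matrix.cons_val_one,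
      Matrix.head_cons, Matrix.head_fin_const, Matrix.empty_val',
      Matrix.cons_val_fin_one, hf, smul_eq_mul]
    norm_num
  have hcont : Continuous f := by fun_prop
  have hfa1 : 0 < f a1 := by
    have h1 : f a1 = (a3 - a1) * X * (a2 - a1) := by simp only [hf]; ring
    rw [h1]
    have ha : (0:ℝ) < a3 - a1 := by linarith
    have hb : (0:ℝ) < a2 - a1 := by linarith
    nlinarith [mul_pos (mul_pos ha hX) hb]
  have hfa2 : f a2 < 0 := by
    have h2 : f a2 = -((a3 - a2) * Y * (a2 - a1)) := by simp only [hf]; ring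
    rw [h2]
    have ha : (0:ℝ) < a3 - a2 := by linarith
    have hb : (0:ℝ) < a2 - a1 := by linarith
    nlinarith [mul_pos (mul_pos ha hY) hb]
  have hfa3 : 0 < f a3 := by
    have h3 : f a3 = (a3 - a1) * (a3 - a2) * (1 - X - Y) := by simp only [hf]; ring
    rw [h3]
    have ha : (0:ℝ) < a3 - a1 := by linarith
    have hb : (0:ℝ) < a3 - a2 := by linarith
    have hc : (0:ℝ) < 1 - X - Y := by linarith
    nlinarith [mul_pos (mul_pos ha hb) hc]
  have h1 : ∃ lam1 ∈ Set.Ioo a1 a2, f lam1 = 0 := by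
    have := intermediate_value_Ioo' (le_of_lt h12) hcont.continuousOn
    have hmem : (0:ℝ) ∈ Set.Ioo (f a2) (f a1) := ⟨hfa2, hfa1⟩
    obtain ⟨lam1, hlam1, hflam1⟩ := this hmem
    exact ⟨lam1, hlam1, hflam1⟩
  have h2 : ∃ lam2 ∈ Set.Ioo a2 a3, f lam2 = 0 := by
    have := intermediate_value_Ioo (le_of_lt h23) hcont.continuousOn
    have hmem : (0:ℝ) ∈ Set.Ioo (f a2) (f a3) := ⟨hfa2, hfa3⟩
    obtain ⟨lam2, hlam2, hflam2⟩ := this hmem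
    exact ⟨lam2, hlam2, hflam2⟩
  obtain ⟨lam1, ⟨hl1a, hl1b⟩, hr1⟩ := h1
  obtain ⟨lam2, ⟨hl2a, hl2b⟩, hr2⟩ := h2
  refine ⟨lam1, lam2, hl1a, hl1b, hl2a, hl2b, by linarith, ?_, ?_⟩
  · exact eig_of_det_eq_zero L lam1 (by rw [hdet]; exact hr1)
  · exact eig_of_det_eq_zero L lam2 (by rw [hdet]; exact hr2)
end

section
/- Let a1 < a2 < a3. With X,Y,p_X,p_Y coordinates on R^4 equipped with the canonical Poisson bracket ({X,p_X}=1, {Y,p_Y}=1, all other brackets of coordinates zero), define H = 2[X(1-X)p_X^2 - 2XY p_X p_Y + Y(1-Y)p_Y^2] + (1/2)(a1-a3)X + (1/2)(a2-a3)Y and H2 = 2(a1 p_Y^2 Y + a2 p_X^2 X)(X+Y-1) - 2 a3 X Y (p_Y - p_X)^2 - (1/2)a2(a1-a3)X - (1/2)a1(a2-a3)Y. Then {H, H2} = 0. -/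
/-- Phase space `ℝ⁴` with coordinates `(X, Y, p_X, p_Y)`. -/
abbrev Phase : Type := ℝ × ℝ × ℝ × ℝ

/-- Canonical Poisson bracket on `ℝ⁴`:
`{F,G} = F_X G_{p_X} - F_{p_X} G_X + F_Y G_{p_Y} - F_{p_Y} G_Y`. -/
noncomputable def pbracket (F G : Phase → ℝ) (q : Phase) : ℝ :=
  fderiv ℝ F q (1, 0, 0, 0) * fderiv ℝ G q (0, 0, 1, 0)
    - fderiv ℝ F q (0, 0, 1, 0) * fderiv ℝ G q (1, 0, 0, 0)
    + fderiv ℝ F q (0, 1, 0, 0) * fderiv ℝ G q (0, 0, 0, 1)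
    - fderiv ℝ F q (0, 0, 0, 1) * fderiv ℝ G q (0, 1, 0, 0)

/-!
Once the partial derivatives of `H` and `H₂` are written out, `{H, H₂}` is a polynomial in
`X, Y, p_X, p_Y, a₁, a₂, a₃` that vanishes identically.
-/

open ContinuousLinearMap in
/-- The differential with partial derivatives `(a, b, c, d)` in the coordinates
`(X, Y, p_X, p_Y)`. -/
noncomputable def phaseCovector (a b c d : ℝ) : Phase →L[ℝ] ℝ :=
  a • fst ℝ ℝ _ + b • fst ℝ ℝ _ ∘L snd ℝ ℝ _ + c • fst ℝ ℝ ℝ ∘L snd ℝ ℝ _ ∘L snd ℝ ℝ _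
    + d • snd ℝ ℝ ℝ ∘L snd ℝ ℝ _ ∘L snd ℝ ℝ _

@[simp]
theorem phaseCovector_apply (a b c d : ℝ) (v : Phase) :
    phaseCovector a b c d v = a * v.1 + b * v.2.1 + c * v.2.2.1 + d * v.2.2.2 :=
  rfl

theorem pbracket_eq_of_hasFDerivAt {F G : Phase → ℝ} {q : Phase}
    {Fx Fy Fpx Fpy Gx Gy Gpx Gpy : ℝ}
    (hF : HasFDerivAt F (phaseCovector Fx Fy Fpx Fpy) q)
    (hG : HasFDerivAt G (phaseCovector Gx Gy Gpx Gpy) q) :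
    pbracket F G q = Fx * Gpx - Fpx * Gx + Fy * Gpy - Fpy * Gy := by
  simp [pbracket, hF.fderiv, hG.fderiv]

section Coordinates

variable (q : Phase)

theorem hasFDerivAt_coordX : HasFDerivAt (fun q : Phase => q.1) (phaseCovector 1 0 0 0) q := by
  convert (phaseCovector 1 0 0 0).hasFDerivAt using 1
  ext v
  simp

theorem hasFDerivAt_coordY : HasFDerivAt (fun q : Phase => q.2.1) (phaseCovector 0 1 0 0) q := by
  convert (phaseCovector 0 1 0 0).hasFDerivAt using 1
  ext v
  simp

theorem hasFDerivAt_coordPX :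
    HasFDerivAt (fun q : Phase => q.2.2.1) (phaseCovector 0 0 1 0) q := by
  convert (phaseCovector 0 0 1 0).hasFDerivAt using 1
  ext v
  simp

theorem hasFDerivAt_coordPY :
    HasFDerivAt (fun q : Phase => q.2.2.2) (phaseCovector 0 0 0 1) q := by
  convert (phaseCovector 0 0 0 1).hasFDerivAt using 1
  ext v
  simp

end Coordinates

namespace Neumann

variable (a1 a2 a3 : ℝ)

noncomputable def hamiltonian (q : Phase) : ℝ :=
  2 * (q.1 * (1 - q.1) * q.2.2.1 ^ 2 - 2 * q.1 * q.2.1 * q.2.2.1 * q.2.2.2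
    + q.2.1 * (1 - q.2.1) * q.2.2.2 ^ 2)
  + (1 / 2) * (a1 - a3) * q.1 + (1 / 2) * (a2 - a3) * q.2.1

noncomputable def secondIntegral (q : Phase) : ℝ :=
  2 * (a1 * q.2.2.2 ^ 2 * q.2.1 + a2 * q.2.2.1 ^ 2 * q.1) * (q.1 + q.2.1 - 1)
  - 2 * a3 * q.1 * q.2.1 * (q.2.2.2 - q.2.2.1) ^ 2
  - (1 / 2) * a2 * (a1 - a3) * q.1 - (1 / 2) * a1 * (a2 - a3) * q.2.1

theorem hasFDerivAt_hamiltonian (q : Phase) :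
    HasFDerivAt (hamiltonian a1 a2 a3) (phaseCovector
      (2 * ((1 - 2 * q.1) * q.2.2.1 ^ 2 - 2 * q.2.1 * q.2.2.1 * q.2.2.2) + (1 / 2) * (a1 - a3))
      (2 * ((1 - 2 * q.2.1) * q.2.2.2 ^ 2 - 2 * q.1 * q.2.2.1 * q.2.2.2) + (1 / 2) * (a2 - a3))
      (4 * q.1 * ((1 - q.1) * q.2.2.1 - q.2.1 * q.2.2.2))
      (4 * q.2.1 * ((1 - q.2.1) * q.2.2.2 - q.1 * q.2.2.1))) q := by
  have hX := hasFDerivAt_coordX q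
  have hY := hasFDerivAt_coordY q
  have hPX := hasFDerivAt_coordPX q
  have hPY := hasFDerivAt_coordPY q
  have h := ((((((hX.mul (hX.const_sub 1)).mul (hPX.pow 2)).sub
    ((((hX.const_mul 2).mul hY).mul hPX).mul hPY)).add
    ((hY.mul (hY.const_sub 1)).mul (hPY.pow 2))).const_mul 2).add
    (hX.const_mul ((1 / 2) * (a1 - a3)))).add (hY.const_mul ((1 / 2) * (a2 - a3)))
  refine h.congr_fderiv (ContinuousLinearMap.ext fun v => ?_)
  simp only [Pi.mul_apply, add_apply, sub_apply, neg_apply, smul_apply, phaseCovector_apply,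
    smul_eq_mul, nsmul_eq_mul]
  ring

theorem hasFDerivAt_secondIntegral (q : Phase) :
    HasFDerivAt (secondIntegral a1 a2 a3) (phaseCovector
      (2 * a2 * q.2.2.1 ^ 2 * (q.1 + q.2.1 - 1)
        + 2 * (a1 * q.2.2.2 ^ 2 * q.2.1 + a2 * q.2.2.1 ^ 2 * q.1)
        - 2 * a3 * q.2.1 * (q.2.2.2 - q.2.2.1) ^ 2 - (1 / 2) * a2 * (a1 - a3))
      (2 * a1 * q.2.2.2 ^ 2 * (q.1 + q.2.1 - 1)
        + 2 * (a1 * q.2.2.2 ^ 2 * q.2.1 + a2 * q.2.2.1 ^ 2 * q.1)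
        - 2 * a3 * q.1 * (q.2.2.2 - q.2.2.1) ^ 2 - (1 / 2) * a1 * (a2 - a3))
      (4 * a2 * q.1 * q.2.2.1 * (q.1 + q.2.1 - 1) + 4 * a3 * q.1 * q.2.1 * (q.2.2.2 - q.2.2.1))
      (4 * a1 * q.2.1 * q.2.2.2 * (q.1 + q.2.1 - 1) - 4 * a3 * q.1 * q.2.1 * (q.2.2.2 - q.2.2.1)))
      q := by
  have hX := hasFDerivAt_coordX q
  have hY := hasFDerivAt_coordY q
  have hPX := hasFDerivAt_coordPX q
  have hPY := hasFDerivAt_coordPY q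
  have h := ((((((((hPY.pow 2).const_mul a1).mul hY).add
    (((hPX.pow 2).const_mul a2).mul hX)).const_mul 2).mul ((hX.add hY).sub_const 1)).sub
    (((hX.const_mul (2 * a3)).mul hY).mul
    ((hPY.sub hPX).pow 2))).sub (hX.const_mul ((1 / 2) * a2 * (a1 - a3)))).sub
    (hY.const_mul ((1 / 2) * a1 * (a2 - a3)))
  refine h.congr_fderiv (ContinuousLinearMap.ext fun v => ?_)
  simp only [Pi.add_apply, Pi.sub_apply, Pi.mul_apply, add_apply, sub_apply, smul_apply,
    phaseCovector_apply, smul_eq_mul, nsmul_eq_mul]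
  ring

theorem pbracket_hamiltonian_secondIntegral (q : Phase) :
    pbracket (hamiltonian a1 a2 a3) (secondIntegral a1 a2 a3) q = 0 := by
  rw [pbracket_eq_of_hasFDerivAt (hasFDerivAt_hamiltonian a1 a2 a3 q)
    (hasFDerivAt_secondIntegral a1 a2 a3 q)]
  ring

end Neumann

theorem neumann_hamiltonian_poisson_commutes_with_H2_general
    (a1 a2 a3 : ℝ)
    (H H2 : Phase → ℝ)
    (hH : ∀ q : Phase, H q =
      2 * (q.1 * (1 - q.1) * q.2.2.1 ^ 2 - 2 * q.1 * q.2.1 * q.2.2.1 * q.2.2.2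
        + q.2.1 * (1 - q.2.1) * q.2.2.2 ^ 2)
      + (1 / 2) * (a1 - a3) * q.1 + (1 / 2) * (a2 - a3) * q.2.1)
    (hH2 : ∀ q : Phase, H2 q =
      2 * (a1 * q.2.2.2 ^ 2 * q.2.1 + a2 * q.2.2.1 ^ 2 * q.1) * (q.1 + q.2.1 - 1)
      - 2 * a3 * q.1 * q.2.1 * (q.2.2.2 - q.2.2.1) ^ 2
      - (1 / 2) * a2 * (a1 - a3) * q.1 - (1 / 2) * a1 * (a2 - a3) * q.2.1) :
    ∀ q : Phase, pbracket H H2 q = 0 := by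
  obtain rfl : H = Neumann.hamiltonian a1 a2 a3 := funext hH
  obtain rfl : H2 = Neumann.secondIntegral a1 a2 a3 := funext hH2
  exact Neumann.pbracket_hamiltonian_secondIntegral a1 a2 a3

/-- The Neumann Hamiltonian and its second integral are in involution. -/
theorem neumann_hamiltonian_poisson_commutes_with_H2
    (a1 a2 a3 : ℝ) (h12 : a1 < a2) (h23 : a2 < a3)
    (H H2 : Phase → ℝ)
    (hH : ∀ q : Phase, H q =
      2 * (q.1 * (1 - q.1) * q.2.2.1 ^ 2 - 2 * q.1 * q.2.1 * q.2.2.1 * q.2.2.2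
        + q.2.1 * (1 - q.2.1) * q.2.2.2 ^ 2)
      + (1 / 2) * (a1 - a3) * q.1 + (1 / 2) * (a2 - a3) * q.2.1)
    (hH2 : ∀ q : Phase, H2 q =
      2 * (a1 * q.2.2.2 ^ 2 * q.2.1 + a2 * q.2.2.1 ^ 2 * q.1) * (q.1 + q.2.1 - 1)
      - 2 * a3 * q.1 * q.2.1 * (q.2.2.2 - q.2.2.1) ^ 2
      - (1 / 2) * a2 * (a1 - a3) * q.1 - (1 / 2) * a1 * (a2 - a3) * q.2.1) :
    ∀ q : Phase, pbracket H H2 q = 0 :=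
  neumann_hamiltonian_poisson_commutes_with_H2_general a1 a2 a3 H H2 hH hH2
end

section
/- Let a1 < a2 < a3 and let L be the matrix-valued function on {(X,Y): X>0, Y>0, X+Y<1} given by rows (A,B;C,D) with A = (a3-a1)X+a1, B = (a3-a2)X, C = (a3-a1)Y, D = (a3-a2)Y+a2. Then the two eigenvalue functions λ1(X,Y) < λ2(X,Y) of L are functionally independent: the map (X,Y) ↦ (λ1,λ2) has everywhere invertible Jacobian. -/
/-!
On the triangle, `λ₁ < λ₂` are the sorted roots of `λ² - tλ + d` with `t = tr L`, `d = det L`,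
so `(λ₁, λ₂) = R ∘ (tr L, det L)` with `R (t, d) = ((t ∓ √(t² - 4d)) / 2)`. The map `R` is a
local inverse of `(u, v) ↦ (u + v, uv)`, whose Jacobian determinant `u - v` is nonzero because
`λ₁ ≠ λ₂`. The `XY` terms of `AD - BC` cancel, so `(tr L, det L)` is affine in `(X, Y)`, with
Jacobian determinant `(a₃ - a₁)(a₃ - a₂)(a₁ - a₂) ≠ 0`.
-/

open ContinuousLinearMap

section TwoByTwo

variable {𝕜 : Type*} [NontriviallyNormedField 𝕜] [CompleteSpace 𝕜]

theorem exists_continuousLinearEquiv_eq_prod_of_det_ne_zero {a b c d : 𝕜}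
    (h : a * d - b * c ≠ 0) :
    ∃ e : (𝕜 × 𝕜) ≃L[𝕜] (𝕜 × 𝕜), (e : 𝕜 × 𝕜 →L[𝕜] 𝕜 × 𝕜) =
      (a • fst 𝕜 𝕜 𝕜 + b • snd 𝕜 𝕜 𝕜).prod (c • fst 𝕜 𝕜 𝕜 + d • snd 𝕜 𝕜 𝕜) := by
  rw [← Matrix.toLin_finTwoProd_toContinuousLinearMap]
  refine ⟨toContinuousLinearEquivOfDetNeZero _ ?_, coe_toContinuousLinearEquivOfDetNeZero _ _⟩
  rwa [det, LinearMap.coe_toContinuousLinearMap, LinearMap.det_toLin, Matrix.det_fin_two_of]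

theorem exists_continuousLinearEquiv_hasFDerivAt_affine {a b c d : 𝕜} (h : a * d - b * c ≠ 0)
    (e f : 𝕜) (x : 𝕜 × 𝕜) :
    ∃ J : (𝕜 × 𝕜) ≃L[𝕜] (𝕜 × 𝕜),
      HasFDerivAt (fun q : 𝕜 × 𝕜 => (a * q.1 + b * q.2 + e, c * q.1 + d * q.2 + f))
        (J : 𝕜 × 𝕜 →L[𝕜] 𝕜 × 𝕜) x := by
  obtain ⟨J, hJ⟩ := exists_continuousLinearEquiv_eq_prod_of_det_ne_zero h
  refine ⟨J, hJ ▸ ?_⟩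
  exact (((hasFDerivAt_fst.const_mul a).add (hasFDerivAt_snd.const_mul b)).add_const e).prodMk
    (((hasFDerivAt_fst.const_mul c).add (hasFDerivAt_snd.const_mul d)).add_const f)

end TwoByTwo

theorem exists_continuousLinearEquiv_hasFDerivAt_comp {𝕜 E : Type*} [NontriviallyNormedField 𝕜]
    [NormedAddCommGroup E] [NormedSpace 𝕜 E] {g f : E → E} {x : E}
    (hg : ∃ e : E ≃L[𝕜] E, HasFDerivAt g (e : E →L[𝕜] E) (f x))
    (hf : ∃ e : E ≃L[𝕜] E, HasFDerivAt f (e : E →L[𝕜] E) x) :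
    ∃ e : E ≃L[𝕜] E, HasFDerivAt (g ∘ f) (e : E →L[𝕜] E) x := by
  obtain ⟨eg, hg⟩ := hg
  obtain ⟨ef, hf⟩ := hf
  exact ⟨ef.trans eg, hg.comp x hf⟩

theorem add_eq_and_mul_eq_of_roots {R : Type*} [CommRing R] [IsDomain R] {u v t d : R}
    (hu : u ^ 2 - t * u + d = 0) (hv : v ^ 2 - t * v + d = 0) (huv : u ≠ v) :
    u + v = t ∧ u * v = d := by
  have hsum : u + v = t := by
    refine sub_eq_zero.1 (mul_left_cancel₀ (sub_ne_zero.2 huv) ?_)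
    linear_combination hu - hv
  exact ⟨hsum, by linear_combination u * hsum - hu⟩

def sumMul {R : Type*} [Mul R] [Add R] (x : R × R) : R × R := (x.1 + x.2, x.1 * x.2)

theorem hasFDerivAt_sumMul {𝕜 : Type*} [NontriviallyNormedField 𝕜] (x : 𝕜 × 𝕜) :
    HasFDerivAt sumMul ((fst 𝕜 𝕜 𝕜 + snd 𝕜 𝕜 𝕜).prod (x.2 • fst 𝕜 𝕜 𝕜 + x.1 • snd 𝕜 𝕜 𝕜)) x := by
  have hmul : HasFDerivAt (fun q : 𝕜 × 𝕜 => q.1 * q.2) (x.1 • snd 𝕜 𝕜 𝕜 + x.2 • fst 𝕜 𝕜 𝕜) x :=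
    hasFDerivAt_fst.mul hasFDerivAt_snd
  rw [add_comm] at hmul
  exact (hasFDerivAt_fst.add hasFDerivAt_snd).prodMk hmul

noncomputable def sortedRoots (x : ℝ × ℝ) : ℝ × ℝ :=
  ((x.1 - √(x.1 ^ 2 - 4 * x.2)) / 2, (x.1 + √(x.1 ^ 2 - 4 * x.2)) / 2)

theorem continuous_sortedRoots : Continuous sortedRoots := by
  unfold sortedRoots; fun_prop

theorem sumMul_sortedRoots {x : ℝ × ℝ} (hx : 4 * x.2 ≤ x.1 ^ 2) : sumMul (sortedRoots x) = x := by
  have hs := Real.sq_sqrt (sub_nonneg.2 hx)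
  ext <;> simp only [sumMul, sortedRoots]
  · ring
  · linear_combination (-1 / 4) * hs

theorem sortedRoots_sumMul {x : ℝ × ℝ} (hx : x.1 ≤ x.2) : sortedRoots (sumMul x) = x := by
  have hs : √((x.1 + x.2) ^ 2 - 4 * (x.1 * x.2)) = x.2 - x.1 := by
    rw [← Real.sqrt_sq (sub_nonneg.2 hx)]; ring_nf
  ext <;> simp only [sumMul, sortedRoots, hs] <;> ring

theorem exists_continuousLinearEquiv_hasFDerivAt_sortedRoots {x : ℝ × ℝ}
    (hx : 4 * x.2 < x.1 ^ 2) :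
    ∃ e : (ℝ × ℝ) ≃L[ℝ] (ℝ × ℝ), HasFDerivAt sortedRoots (e : ℝ × ℝ →L[ℝ] ℝ × ℝ) x := by
  have hdet : 1 * (sortedRoots x).1 - 1 * (sortedRoots x).2 ≠ 0 := by
    have := Real.sqrt_pos.2 (sub_pos.2 hx)
    simp only [sortedRoots]; linarith
  obtain ⟨e, he⟩ := exists_continuousLinearEquiv_eq_prod_of_det_ne_zero hdet
  simp only [one_smul] at he
  refine ⟨e.symm, HasFDerivAt.of_local_left_inverse continuous_sortedRoots.continuousAt
    (he ▸ hasFDerivAt_sumMul _) ?_⟩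
  have hopen : IsOpen {y : ℝ × ℝ | 4 * y.2 < y.1 ^ 2} := isOpen_lt (by fun_prop) (by fun_prop)
  filter_upwards [hopen.mem_nhds hx] with y hy using sumMul_sortedRoots hy.le

theorem sortedRoots_eq_of_roots {u v t d : ℝ} (hu : u ^ 2 - t * u + d = 0)
    (hv : v ^ 2 - t * v + d = 0) (huv : u < v) : sortedRoots (t, d) = (u, v) := by
  obtain ⟨rfl, rfl⟩ := add_eq_and_mul_eq_of_roots hu hv huv.ne
  exact sortedRoots_sumMul (x := (u, v)) huv.le

theorem four_mul_lt_sq_of_roots {u v t d : ℝ} (hu : u ^ 2 - t * u + d = 0)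
    (hv : v ^ 2 - t * v + d = 0) (huv : u ≠ v) : 4 * d < t ^ 2 := by
  obtain ⟨rfl, rfl⟩ := add_eq_and_mul_eq_of_roots hu hv huv
  nlinarith [sq_pos_of_ne_zero (sub_ne_zero.2 huv)]

/-- The eigenvalue functions (spheroconical coordinates) of the Neumann conformal
Killing tensor are functionally independent: the map `(X,Y) ↦ (λ₁,λ₂)` has everywhere
invertible Jacobian on the domain `{X>0, Y>0, X+Y<1}`. -/
theorem spheroconical_eigenvalues_functionally_independent
    (a1 a2 a3 : ℝ) (h12 : a1 < a2) (h23 : a2 < a3)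
    (S : Set (ℝ × ℝ)) (hS : S = {p : ℝ × ℝ | 0 < p.1 ∧ 0 < p.2 ∧ p.1 + p.2 < 1})
    (A B C D : ℝ × ℝ → ℝ)
    (hA : ∀ p : ℝ × ℝ, A p = (a3 - a1) * p.1 + a1)
    (hB : ∀ p : ℝ × ℝ, B p = (a3 - a2) * p.1)
    (hC : ∀ p : ℝ × ℝ, C p = (a3 - a1) * p.2)
    (hD : ∀ p : ℝ × ℝ, D p = (a3 - a2) * p.2 + a2)
    (lam1 lam2 : ℝ × ℝ → ℝ)
    -- `λ₁ < λ₂` are the two eigenvalues of `L = (A,B;C,D)`, i.e. the roots of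
    -- `λ² - (A+D)λ + (AD - BC)`:
    (hroot1 : ∀ p ∈ S, lam1 p ^ 2 - (A p + D p) * lam1 p + (A p * D p - B p * C p) = 0)
    (hroot2 : ∀ p ∈ S, lam2 p ^ 2 - (A p + D p) * lam2 p + (A p * D p - B p * C p) = 0)
    (hlt : ∀ p ∈ S, lam1 p < lam2 p) :
    ∀ p ∈ S, ∃ J : (ℝ × ℝ) ≃L[ℝ] (ℝ × ℝ),
      HasFDerivAt (fun p' : ℝ × ℝ => (lam1 p', lam2 p'))
        (J : (ℝ × ℝ) →L[ℝ] (ℝ × ℝ)) p := by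
  intro p hp
  set traceDet : ℝ × ℝ → ℝ × ℝ := fun q => (A q + D q, A q * D q - B q * C q)
  have hS_open : IsOpen S := by
    rw [hS]
    exact (isOpen_lt continuous_const continuous_fst).inter
      ((isOpen_lt continuous_const continuous_snd).inter
        (isOpen_lt (continuous_fst.add continuous_snd) continuous_const))
  have hlam : (fun q => (lam1 q, lam2 q)) =ᶠ[nhds p] sortedRoots ∘ traceDet := by
    filter_upwards [hS_open.mem_nhds hp] with q hq
    exact (sortedRoots_eq_of_roots (hroot1 q hq) (hroot2 q hq) (hlt q hq)).symm
  have htraceDet : traceDet = fun q => ((a3 - a1) * q.1 + (a3 - a2) * q.2 + (a1 + a2),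
      (a3 - a1) * a2 * q.1 + (a3 - a2) * a1 * q.2 + a1 * a2) := by
    funext q; simp only [traceDet, hA, hB, hC, hD]; ext <;> ring
  have hdet : (a3 - a1) * ((a3 - a2) * a1) - (a3 - a2) * ((a3 - a1) * a2) ≠ 0 := by
    rw [show (a3 - a1) * ((a3 - a2) * a1) - (a3 - a2) * ((a3 - a1) * a2)
      = (a3 - a1) * (a3 - a2) * (a1 - a2) by ring]
    exact mul_ne_zero (mul_ne_zero (by linarith) (by linarith)) (by linarith)
  obtain ⟨J, hJ⟩ := exists_continuousLinearEquiv_hasFDerivAt_comp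
    (exists_continuousLinearEquiv_hasFDerivAt_sortedRoots
      (four_mul_lt_sq_of_roots (hroot1 p hp) (hroot2 p hp) (hlt p hp).ne))
    (htraceDet ▸ exists_continuousLinearEquiv_hasFDerivAt_affine hdet _ _ p)
  exact ⟨J, hJ.congr_of_eventuallyEq hlam⟩
end

section
/- Let a1 < a2 < a3 and H, H2 be the Neumann Hamiltonian and second integral on R^4 in coordinates (X,Y,p_X,p_Y) (H = 2[X(1-X)p_X^2 - 2XY p_X p_Y + Y(1-Y)p_Y^2] + (1/2)(a1-a3)X + (1/2)(a2-a3)Y; H2 = 2(a1 p_Y^2 Y + a2 p_X^2 X)(X+Y-1) - 2a3 XY(p_Y-p_X)^2 - (1/2)a2(a1-a3)X - (1/2)a1(a2-a3)Y). Then dH and dH2 are linearly independent on a dense open subset of R^4; in particular H and H2 are functionally independent. -/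
/-- Directional derivative of a differentiable function, computed from an explicit
quadratic expansion along the line `t ↦ q + t • v`. -/
lemma dirDeriv_of_quad (f : Phase → ℝ) (q v : Phase) (hf : DifferentiableAt ℝ f q)
    (a b c : ℝ) (hfun : ∀ t : ℝ, f (q + t • v) = a + (b * t + c * t ^ 2)) :
    fderiv ℝ f q v = b := by
  have hline : HasDerivAt (fun t : ℝ => q + t • v) v 0 := by
    simpa using ((hasDerivAt_id (0 : ℝ)).smul_const v).const_add q
  have h0 : q + (0 : ℝ) • v = q := by simp
  have hf' : HasFDerivAt f (fderiv ℝ f q) (q + (0 : ℝ) • v) := by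
    rw [h0]; exact hf.hasFDerivAt
  have h1 : HasDerivAt (fun t : ℝ => f (q + t • v)) (fderiv ℝ f q v) 0 :=
    hf'.comp_hasDerivAt 0 hline
  have hb : HasDerivAt (fun t : ℝ => b * t) b 0 := by
    simpa using (hasDerivAt_id (0 : ℝ)).const_mul b
  have hc : HasDerivAt (fun t : ℝ => c * t ^ 2) 0 0 := by
    simpa using (hasDerivAt_pow 2 (0 : ℝ)).const_mul c
  have h2 : HasDerivAt (fun t : ℝ => f (q + t • v)) b 0 := by
    have h3 := ((hb.add hc).const_add a)
    rw [show (fun t : ℝ => f (q + t • v)) = fun t : ℝ => a + (b * t + c * t ^ 2) from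
      funext fun t => hfun t]
    simpa using h3
  exact h1.unique h2

/-- The differentials of the Neumann Hamiltonian `H` and of its second integral `H₂`
are linearly independent on a dense open subset of `ℝ⁴`; in particular `H` and `H₂`
are functionally independent. -/
theorem neumann_integrals_functionally_independent
    (a1 a2 a3 : ℝ) (h12 : a1 < a2) (h23 : a2 < a3)
    (H H2 : Phase → ℝ)
    (hH : ∀ q : Phase, H q =
      2 * (q.1 * (1 - q.1) * q.2.2.1 ^ 2 - 2 * q.1 * q.2.1 * q.2.2.1 * q.2.2.2
        + q.2.1 * (1 - q.2.1) * q.2.2.2 ^ 2)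
      + (1 / 2) * (a1 - a3) * q.1 + (1 / 2) * (a2 - a3) * q.2.1)
    (hH2 : ∀ q : Phase, H2 q =
      2 * (a1 * q.2.2.2 ^ 2 * q.2.1 + a2 * q.2.2.1 ^ 2 * q.1) * (q.1 + q.2.1 - 1)
      - 2 * a3 * q.1 * q.2.1 * (q.2.2.2 - q.2.2.1) ^ 2
      - (1 / 2) * a2 * (a1 - a3) * q.1 - (1 / 2) * a1 * (a2 - a3) * q.2.1) :
    ∃ U : Set Phase, IsOpen U ∧ Dense U ∧
      ∀ q ∈ U, LinearIndependent ℝ ![fderiv ℝ H q, fderiv ℝ H2 q] := by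
  have hHfun : H = fun q : Phase =>
      2 * (q.1 * (1 - q.1) * q.2.2.1 ^ 2 - 2 * q.1 * q.2.1 * q.2.2.1 * q.2.2.2
        + q.2.1 * (1 - q.2.1) * q.2.2.2 ^ 2)
      + (1 / 2) * (a1 - a3) * q.1 + (1 / 2) * (a2 - a3) * q.2.1 := funext hH
  have hH2fun : H2 = fun q : Phase =>
      2 * (a1 * q.2.2.2 ^ 2 * q.2.1 + a2 * q.2.2.1 ^ 2 * q.1) * (q.1 + q.2.1 - 1)
      - 2 * a3 * q.1 * q.2.1 * (q.2.2.2 - q.2.2.1) ^ 2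
      - (1 / 2) * a2 * (a1 - a3) * q.1 - (1 / 2) * a1 * (a2 - a3) * q.2.1 := funext hH2
  subst hHfun hH2fun
  -- the minor of the Jacobian in the (p_X, p_Y) directions
  set M : Phase → ℝ := fun q =>
    (4 * q.1 * (1 - q.1) * q.2.2.1 - 4 * q.1 * q.2.1 * q.2.2.2) *
      (4 * a1 * q.2.2.2 * q.2.1 * (q.1 + q.2.1 - 1)
        - 4 * a3 * q.1 * q.2.1 * (q.2.2.2 - q.2.2.1))
    - (-(4 * q.1 * q.2.1 * q.2.2.1) + 4 * q.2.1 * (1 - q.2.1) * q.2.2.2) *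
      (4 * a2 * q.2.2.1 * q.1 * (q.1 + q.2.1 - 1)
        + 4 * a3 * q.1 * q.2.1 * (q.2.2.2 - q.2.2.1)) with hM
  have hMq0 : M (1, 1, 1, 0) ≠ 0 := by
    have : M (1, 1, 1, 0) = 16 * (a2 - a3) := by simp [hM]; ring
    rw [this]
    exact ne_of_lt (by nlinarith)
  have hMana : AnalyticOnNhd ℝ M Set.univ := by
    intro x _
    have h1 : AnalyticAt ℝ (fun q : Phase => q.1) x := analyticAt_fst
    have h2 : AnalyticAt ℝ (fun q : Phase => q.2.1) x := analyticAt_fst.comp analyticAt_snd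
    have h3 : AnalyticAt ℝ (fun q : Phase => q.2.2.1) x :=
      (analyticAt_fst.comp analyticAt_snd).comp analyticAt_snd
    have h4 : AnalyticAt ℝ (fun q : Phase => q.2.2.2) x :=
      (analyticAt_snd.comp analyticAt_snd).comp analyticAt_snd
    have hc : ∀ r : ℝ, AnalyticAt ℝ (fun _ : Phase => r) x := fun r => analyticAt_const
    exact (((((hc 4).mul h1).mul ((hc 1).sub h1)).mul h3).sub
        ((((hc 4).mul h1).mul h2).mul h4)).mul
        (((((hc 4).mul (hc a1)).mul h4).mul h2).mul ((h1.add h2).sub (hc 1)) |>.sub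
          (((((hc 4).mul (hc a3)).mul h1).mul h2).mul (h4.sub h3))) |>.sub
      (((((hc 4).mul h1).mul h2).mul h3).neg.add ((((hc 4).mul h2).mul ((hc 1).sub h2)).mul h4)
        |>.mul
        ((((((hc 4).mul (hc a2)).mul h3).mul h1).mul ((h1.add h2).sub (hc 1))).add
          (((((hc 4).mul (hc a3)).mul h1).mul h2).mul (h4.sub h3))))
  have hMcont : Continuous M := by
    rw [hM]; fun_prop
  refine ⟨{q | M q ≠ 0}, isOpen_compl_singleton.preimage hMcont, ?_, ?_⟩
  · -- density via the identity principle for analytic functions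
    by_contra hd
    rw [Dense] at hd
    push_neg at hd
    obtain ⟨x, hx⟩ := hd
    rw [mem_closure_iff] at hx
    push_neg at hx
    obtain ⟨o, ho, hxo, hos⟩ := hx
    have hev : M =ᶠ[nhds x] 0 := by
      filter_upwards [ho.mem_nhds hxo] with y hy
      by_contra hy'
      have hmem : y ∈ o ∩ {q | M q ≠ 0} := ⟨hy, hy'⟩
      rw [hos] at hmem
      exact hmem
    have := hMana.eqOn_zero_of_preconnected_of_eventuallyEq_zero isPreconnected_univ
      (Set.mem_univ x) hev (Set.mem_univ (1, 1, 1, 0))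
    exact hMq0 this
  · rintro ⟨x, y, px, py⟩ hq
    simp only [Set.mem_setOf_eq, hM] at hq
    set HH : Phase → ℝ := fun q : Phase =>
      2 * (q.1 * (1 - q.1) * q.2.2.1 ^ 2 - 2 * q.1 * q.2.1 * q.2.2.1 * q.2.2.2
        + q.2.1 * (1 - q.2.1) * q.2.2.2 ^ 2)
      + (1 / 2) * (a1 - a3) * q.1 + (1 / 2) * (a2 - a3) * q.2.1 with hHH
    set GG : Phase → ℝ := fun q : Phase =>
      2 * (a1 * q.2.2.2 ^ 2 * q.2.1 + a2 * q.2.2.1 ^ 2 * q.1) * (q.1 + q.2.1 - 1)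
      - 2 * a3 * q.1 * q.2.1 * (q.2.2.2 - q.2.2.1) ^ 2
      - (1 / 2) * a2 * (a1 - a3) * q.1 - (1 / 2) * a1 * (a2 - a3) * q.2.1 with hGG
    have hHd : DifferentiableAt ℝ HH (x, y, px, py) := by rw [hHH]; fun_prop
    have hGd : DifferentiableAt ℝ GG (x, y, px, py) := by rw [hGG]; fun_prop
    set e3 : Phase := (0, 0, 1, 0) with he3
    set e4 : Phase := (0, 0, 0, 1) with he4
    have dH3 : fderiv ℝ HH (x, y, px, py) e3
        = 4 * x * (1 - x) * px - 4 * x * y * py := by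
      apply dirDeriv_of_quad HH (x, y, px, py) e3 hHd (HH (x, y, px, py)) _
        (2 * x * (1 - x))
      intro t
      simp only [hHH, he3, Prod.smul_mk, smul_eq_mul, Prod.mk_add_mk]
      ring
    have dH4 : fderiv ℝ HH (x, y, px, py) e4
        = -(4 * x * y * px) + 4 * y * (1 - y) * py := by
      apply dirDeriv_of_quad HH (x, y, px, py) e4 hHd (HH (x, y, px, py)) _
        (2 * y * (1 - y))
      intro t
      simp only [hHH, he4, Prod.smul_mk, smul_eq_mul, Prod.mk_add_mk]
      ring
    have dG3 : fderiv ℝ GG (x, y, px, py) e3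
        = 4 * a2 * px * x * (x + y - 1) + 4 * a3 * x * y * (py - px) := by
      apply dirDeriv_of_quad GG (x, y, px, py) e3 hGd (GG (x, y, px, py)) _
        (2 * a2 * x * (x + y - 1) - 2 * a3 * x * y)
      intro t
      simp only [hGG, he3, Prod.smul_mk, smul_eq_mul, Prod.mk_add_mk]
      ring
    have dG4 : fderiv ℝ GG (x, y, px, py) e4
        = 4 * a1 * py * y * (x + y - 1) - 4 * a3 * x * y * (py - px) := by
      apply dirDeriv_of_quad GG (x, y, px, py) e4 hGd (GG (x, y, px, py)) _
        (2 * a1 * y * (x + y - 1) - 2 * a3 * x * y)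
      intro t
      simp only [hGG, he4, Prod.smul_mk, smul_eq_mul, Prod.mk_add_mk]
      ring
    rw [LinearIndependent.pair_iff]
    intro s t hst
    have e1 : s * fderiv ℝ HH (x, y, px, py) e3 + t * fderiv ℝ GG (x, y, px, py) e3 = 0 := by
      have := congrArg (fun L : Phase →L[ℝ] ℝ => L e3) hst
      simpa using this
    have e2 : s * fderiv ℝ HH (x, y, px, py) e4 + t * fderiv ℝ GG (x, y, px, py) e4 = 0 := by
      have := congrArg (fun L : Phase →L[ℝ] ℝ => L e4) hst
      simpa using this
    rw [dH3, dG3] at e1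
    rw [dH4, dG4] at e2
    constructor
    · by_contra hs
      apply hq
      have hsM : s * ((4 * x * (1 - x) * px - 4 * x * y * py) *
          (4 * a1 * py * y * (x + y - 1) - 4 * a3 * x * y * (py - px))
          - (-(4 * x * y * px) + 4 * y * (1 - y) * py) *
          (4 * a2 * px * x * (x + y - 1) + 4 * a3 * x * y * (py - px))) = 0 := by
        linear_combination (4 * a1 * py * y * (x + y - 1) - 4 * a3 * x * y * (py - px)) * e1
          - (4 * a2 * px * x * (x + y - 1) + 4 * a3 * x * y * (py - px)) * e2
      rcases mul_eq_zero.mp hsM with h | h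
      · exact absurd h hs
      · exact h
    · by_contra ht
      apply hq
      have htM : t * ((4 * x * (1 - x) * px - 4 * x * y * py) *
          (4 * a1 * py * y * (x + y - 1) - 4 * a3 * x * y * (py - px))
          - (-(4 * x * y * px) + 4 * y * (1 - y) * py) *
          (4 * a2 * px * x * (x + y - 1) + 4 * a3 * x * y * (py - px))) = 0 := by
        linear_combination (4 * x * (1 - x) * px - 4 * x * y * py) * e2
          - (-(4 * x * y * px) + 4 * y * (1 - y) * py) * e1
      rcases mul_eq_zero.mp htM with h | h
      · exact absurd h ht
      · exact h
end

section
/- Let a1 < a2 < a3 and let H, H2 be the Neumann Hamiltonian and second integral on R^4 as above. With the second bracket {F,G}' = ω(N X_F, X_G) defined via the complete lift N of the Neumann tensor L, one has {H, H2}' = 0. -/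
/-- Partial derivative of `F` in the constant direction `v`. -/
noncomputable def pd (F : Phase → ℝ) (v : Phase) (q : Phase) : ℝ := fderiv ℝ F q v

/-- The canonical symplectic form `ω = dX∧dp_X + dY∧dp_Y` on constant vectors. -/
def omega (u v : Phase) : ℝ :=
  u.1 * v.2.2.1 - u.2.2.1 * v.1 + u.2.1 * v.2.2.2 - u.2.2.2 * v.2.1

/-- The Hamiltonian vector field of `F` with respect to `ω`. -/
noncomputable def hamVF (F : Phase → ℝ) (q : Phase) : Phase :=
  (pd F (0,0,1,0) q, pd F (0,0,0,1) q, -pd F (1,0,0,0) q, -pd F (0,1,0,0) q)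

noncomputable section Neumann

variable (a1 a2 a3 : ℝ)

def neumannH : Phase → ℝ := fun q =>
  2 * (q.1 * (1 - q.1) * q.2.2.1 ^ 2 - 2 * q.1 * q.2.1 * q.2.2.1 * q.2.2.2
    + q.2.1 * (1 - q.2.1) * q.2.2.2 ^ 2)
  + (1 / 2) * (a1 - a3) * q.1 + (1 / 2) * (a2 - a3) * q.2.1

def neumannH2 : Phase → ℝ := fun q =>
  2 * (a1 * q.2.2.2 ^ 2 * q.2.1 + a2 * q.2.2.1 ^ 2 * q.1) * (q.1 + q.2.1 - 1)
  - 2 * a3 * q.1 * q.2.1 * (q.2.2.2 - q.2.2.1) ^ 2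
  - (1 / 2) * a2 * (a1 - a3) * q.1 - (1 / 2) * a1 * (a2 - a3) * q.2.1

lemma hamVF_neumannH (X Y pX pY : ℝ) :
    hamVF (neumannH a1 a2 a3) (X, Y, pX, pY) =
      (4 * X * (1 - X) * pX - 4 * X * Y * pY,
       4 * Y * (1 - Y) * pY - 4 * X * Y * pX,
       -(2 * (1 - 2 * X) * pX ^ 2 - 4 * Y * pX * pY + (a1 - a3) / 2),
       -(2 * (1 - 2 * Y) * pY ^ 2 - 4 * X * pX * pY + (a2 - a3) / 2)) := by
  unfold neumannH
  simp (disch := fun_prop) only [hamVF, pd, fderiv_fun_mul, fderiv_fun_pow, fderiv_fun_add,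
    fderiv_fun_sub, fderiv_fun_const, fderiv.fst, fderiv.snd, fderiv_fun_id, add_apply,
    sub_apply, smul_apply, ContinuousLinearMap.comp_apply, ContinuousLinearMap.coe_fst',
    ContinuousLinearMap.coe_snd', ContinuousLinearMap.id_apply, Pi.zero_apply, zero_apply,
    smul_eq_mul, nsmul_eq_mul, Prod.mk.injEq]
  refine ⟨?_, ?_, ?_, ?_⟩ <;> ring

lemma hamVF_neumannH2 (X Y pX pY : ℝ) :
    hamVF (neumannH2 a1 a2 a3) (X, Y, pX, pY) =
      (4 * a2 * X * pX * (X + Y - 1) + 4 * a3 * X * Y * (pY - pX),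
       4 * a1 * Y * pY * (X + Y - 1) - 4 * a3 * X * Y * (pY - pX),
       -(2 * a2 * pX ^ 2 * (X + Y - 1) + 2 * (a1 * pY ^ 2 * Y + a2 * pX ^ 2 * X)
          - 2 * a3 * Y * (pY - pX) ^ 2 - a2 * (a1 - a3) / 2),
       -(2 * a1 * pY ^ 2 * (X + Y - 1) + 2 * (a1 * pY ^ 2 * Y + a2 * pX ^ 2 * X)
          - 2 * a3 * X * (pY - pX) ^ 2 - a1 * (a2 - a3) / 2)) := by
  unfold neumannH2
  simp (disch := fun_prop) only [hamVF, pd, fderiv_fun_mul, fderiv_fun_pow, fderiv_fun_add,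
    fderiv_fun_sub, fderiv_fun_const, fderiv.fst, fderiv.snd, fderiv_fun_id, add_apply,
    sub_apply, smul_apply, ContinuousLinearMap.comp_apply, ContinuousLinearMap.coe_fst',
    ContinuousLinearMap.coe_snd', ContinuousLinearMap.id_apply, Pi.zero_apply, zero_apply,
    smul_eq_mul, nsmul_eq_mul, Prod.mk.injEq]
  refine ⟨?_, ?_, ?_, ?_⟩ <;> ring

end Neumann

theorem neumann_second_bracket_involution_general
    (a1 a2 a3 : ℝ)
    (A B C D kappa : Phase → ℝ)
    (hA : ∀ q : Phase, A q = (a3 - a1) * q.1 + a1)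
    (hB : ∀ q : Phase, B q = (a3 - a2) * q.1)
    (hC : ∀ q : Phase, C q = (a3 - a1) * q.2.1)
    (hD : ∀ q : Phase, D q = (a3 - a2) * q.2.1 + a2)
    (hkappa : ∀ q : Phase, kappa q =
      q.2.2.1 * (pd B (1,0,0,0) q - pd A (0,1,0,0) q)
        + q.2.2.2 * (pd D (1,0,0,0) q - pd C (0,1,0,0) q))
    (Nmap : Phase → Phase → Phase)
    (hN : ∀ q v : Phase, Nmap q v =
      (A q * v.1 + B q * v.2.1,
       C q * v.1 + D q * v.2.1,
       -kappa q * v.2.1 + A q * v.2.2.1 + C q * v.2.2.2,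
       kappa q * v.1 + B q * v.2.2.1 + D q * v.2.2.2))
    (bk' : (Phase → ℝ) → (Phase → ℝ) → (Phase → ℝ))
    (hbk' : ∀ (F G : Phase → ℝ) (q : Phase),
      bk' F G q = omega (Nmap q (hamVF F q)) (hamVF G q))
    (H H2 : Phase → ℝ)
    (hH : ∀ q : Phase, H q =
      2 * (q.1 * (1 - q.1) * q.2.2.1 ^ 2 - 2 * q.1 * q.2.1 * q.2.2.1 * q.2.2.2
        + q.2.1 * (1 - q.2.1) * q.2.2.2 ^ 2)
      + (1 / 2) * (a1 - a3) * q.1 + (1 / 2) * (a2 - a3) * q.2.1)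
    (hH2 : ∀ q : Phase, H2 q =
      2 * (a1 * q.2.2.2 ^ 2 * q.2.1 + a2 * q.2.2.1 ^ 2 * q.1) * (q.1 + q.2.1 - 1)
      - 2 * a3 * q.1 * q.2.1 * (q.2.2.2 - q.2.2.1) ^ 2
      - (1 / 2) * a2 * (a1 - a3) * q.1 - (1 / 2) * a1 * (a2 - a3) * q.2.1) :
    ∀ q : Phase, bk' H H2 q = 0 := by
  have hκ : ∀ q : Phase, kappa q = (a3 - a2) * q.2.2.1 - (a3 - a1) * q.2.2.2 := by
    intro q
    rw [hkappa, show A = _ from funext hA, show B = _ from funext hB,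
      show C = _ from funext hC, show D = _ from funext hD]
    simp (disch := fun_prop) only [pd, fderiv_fun_mul, fderiv_fun_add, fderiv_fun_const,
      fderiv.fst, fderiv.snd, fderiv_fun_id, add_apply, smul_apply, ContinuousLinearMap.comp_apply,
      ContinuousLinearMap.coe_fst', ContinuousLinearMap.coe_snd', ContinuousLinearMap.id_apply,
      Pi.zero_apply, zero_apply, smul_eq_mul]
    ring
  obtain rfl : H = neumannH a1 a2 a3 := funext hH
  obtain rfl : H2 = neumannH2 a1 a2 a3 := funext hH2
  rintro ⟨X, Y, pX, pY⟩
  rw [hbk', hamVF_neumannH, hamVF_neumannH2, hN, hκ, hA, hB, hC, hD]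
  simp only [omega]
  ring

/-- The Neumann Hamiltonian `H` and its second integral `H₂` are in involution also
with respect to the second bracket `{F,G}' = ω(N X_F, X_G)` defined via the complete
lift `N` of the conformal Killing tensor: `{H,H₂}' = 0`. -/
theorem neumann_second_bracket_involution
    (a1 a2 a3 : ℝ) (h12 : a1 < a2) (h23 : a2 < a3)
    (A B C D kappa : Phase → ℝ)
    (hA : ∀ q : Phase, A q = (a3 - a1) * q.1 + a1)
    (hB : ∀ q : Phase, B q = (a3 - a2) * q.1)
    (hC : ∀ q : Phase, C q = (a3 - a1) * q.2.1)
    (hD : ∀ q : Phase, D q = (a3 - a2) * q.2.1 + a2)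
    (hkappa : ∀ q : Phase, kappa q =
      q.2.2.1 * (pd B (1,0,0,0) q - pd A (0,1,0,0) q)
        + q.2.2.2 * (pd D (1,0,0,0) q - pd C (0,1,0,0) q))
    (Nmap : Phase → Phase → Phase)
    (hN : ∀ q v : Phase, Nmap q v =
      (A q * v.1 + B q * v.2.1,
       C q * v.1 + D q * v.2.1,
       -kappa q * v.2.1 + A q * v.2.2.1 + C q * v.2.2.2,
       kappa q * v.1 + B q * v.2.2.1 + D q * v.2.2.2))
    (bk' : (Phase → ℝ) → (Phase → ℝ) → (Phase → ℝ))
    (hbk' : ∀ (F G : Phase → ℝ) (q : Phase),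
      bk' F G q = omega (Nmap q (hamVF F q)) (hamVF G q))
    (H H2 : Phase → ℝ)
    (hH : ∀ q : Phase, H q =
      2 * (q.1 * (1 - q.1) * q.2.2.1 ^ 2 - 2 * q.1 * q.2.1 * q.2.2.1 * q.2.2.2
        + q.2.1 * (1 - q.2.1) * q.2.2.2 ^ 2)
      + (1 / 2) * (a1 - a3) * q.1 + (1 / 2) * (a2 - a3) * q.2.1)
    (hH2 : ∀ q : Phase, H2 q =
      2 * (a1 * q.2.2.2 ^ 2 * q.2.1 + a2 * q.2.2.1 ^ 2 * q.1) * (q.1 + q.2.1 - 1)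
      - 2 * a3 * q.1 * q.2.1 * (q.2.2.2 - q.2.2.1) ^ 2
      - (1 / 2) * a2 * (a1 - a3) * q.1 - (1 / 2) * a1 * (a2 - a3) * q.2.1) :
    ∀ q : Phase, bk' H H2 q = 0 :=
  neumann_second_bracket_involution_general a1 a2 a3 A B C D kappa hA hB hC hD hkappa Nmap hN bk'
    hbk' H H2 hH hH2
end
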